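/- arXiv:1701.01549 — 5 statements merged into one kernel-verified Lean document; each statement's English description precedes it below -/
import Mathlib

section
/- Let W(x) be an s×t matrix with complex polynomial entries, s ≥ t. If W(u) has rank t for every u ∈ ℂⁿ, then there exists a t×s matrix P(x) with complex polynomial entries such that P(x)W(x) = I_t. -/
/-!
At each point `u` some `t × t` minor of `W(u)` is nonzero, so the maximal minors of `W` have no
common zero and, by the weak Nullstellensatz, generate the unit ideal. Writing
`1 = ∑ c_σ det W_σ`, the matrix `∑ c_σ adj(W_σ) E_σ`, where `E_σ` selects the rows `σ`, is a left
inverse of `W`.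
-/

open MvPolynomial

namespace Matrix

theorem exists_det_submatrix_ne_zero_of_rank_eq {K m n : Type*} [Field K] [Finite m]
    [Fintype n] [DecidableEq n] (A : Matrix m n K) (h : A.rank = Fintype.card n) :
    ∃ σ : n → m, (A.submatrix σ id).det ≠ 0 := by
  obtain ⟨κ, a, ha, hspan, hli⟩ := exists_linearIndependent' K A.row
  have : Finite κ := Finite.of_injective a ha
  have : Fintype κ := Fintype.ofFinite κ
  have hcard : Fintype.card κ = Fintype.card n := by
    rw [linearIndependent_iff_card_eq_finrank_span.1 hli, Set.finrank, hspan, ← h,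
      rank_eq_finrank_span_row]
  let e : n ≃ κ := Fintype.equivOfCardEq hcard.symm
  refine ⟨a ∘ e, ?_⟩
  have hunit : IsUnit (A.submatrix (a ∘ e) id) :=
    linearIndependent_rows_iff_isUnit.1 (hli.comp e e.injective)
  exact ((isUnit_iff_isUnit_det _).1 hunit).ne_zero

variable {R m n : Type*} [CommRing R] [Fintype m] [Fintype n] [DecidableEq m] [DecidableEq n]

theorem adjugate_submatrix_mul_one_submatrix_mul (W : Matrix m n R) (σ : n → m) :
    (W.submatrix σ id).adjugate * (1 : Matrix m m R).submatrix σ id * W =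
      (W.submatrix σ id).det • (1 : Matrix n n R) := by
  have hselect : (1 : Matrix m m R).submatrix σ id * W = W.submatrix σ id := by
    simpa using (submatrix_mul (1 : Matrix m m R) W σ id id Function.bijective_id).symm
  rw [Matrix.mul_assoc, hselect, adjugate_mul]

theorem exists_mul_eq_one_of_span_det_submatrix_eq_top (W : Matrix m n R)
    (h : Ideal.span (Set.range fun σ : n → m => (W.submatrix σ id).det) = ⊤) :
    ∃ P : Matrix n m R, P * W = 1 := by
  obtain ⟨c, hc⟩ := Ideal.mem_span_range_iff_exists_fun.1 (h ▸ Submodule.mem_top (x := (1 : R)))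
  refine ⟨∑ σ, c σ • ((W.submatrix σ id).adjugate * (1 : Matrix m m R).submatrix σ id), ?_⟩
  simp only [Matrix.sum_mul, Matrix.smul_mul, adjugate_submatrix_mul_one_submatrix_mul, smul_smul,
    ← Finset.sum_smul, hc, one_smul]

end Matrix

namespace MvPolynomial

theorem eq_top_of_zeroLocus_eq_empty {k K σ : Type*} [Field k] [Field K] [Algebra k K]
    [IsAlgClosed K] [Finite σ] {I : Ideal (MvPolynomial σ k)} (h : zeroLocus K I = ∅) :
    I = ⊤ := by
  rw [← Ideal.radical_eq_top, ← vanishingIdeal_zeroLocus_eq_radical (K := K), h,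
    vanishingIdeal_empty]

theorem span_range_eq_top_of_forall_exists_eval_ne_zero {K σ ι : Type*} [Field K]
    [IsAlgClosed K] [Finite σ] (g : ι → MvPolynomial σ K) (h : ∀ x, ∃ i, eval x (g i) ≠ 0) :
    Ideal.span (Set.range g) = ⊤ := by
  refine eq_top_of_zeroLocus_eq_empty (K := K) (Set.eq_empty_of_forall_notMem fun x hx => ?_)
  obtain ⟨i, hi⟩ := h x
  exact hi ((mem_zeroLocus_iff.1 hx) _ (Ideal.subset_span ⟨i, rfl⟩))

end MvPolynomial

theorem stmt5_general (n s t : ℕ)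
    (W : Matrix (Fin s) (Fin t) (MvPolynomial (Fin n) ℂ))
    (hrk : ∀ u : Fin n → ℂ, (W.map (eval u)).rank = t) :
    ∃ P : Matrix (Fin t) (Fin s) (MvPolynomial (Fin n) ℂ), P * W = 1 := by
  refine W.exists_mul_eq_one_of_span_det_submatrix_eq_top
    (span_range_eq_top_of_forall_exists_eval_ne_zero _ fun u => ?_)
  obtain ⟨σ, hσ⟩ := (W.map (eval u)).exists_det_submatrix_ne_zero_of_rank_eq
    (by rw [hrk u, Fintype.card_fin])
  refine ⟨σ, ?_⟩
  rwa [RingHom.map_det, RingHom.mapMatrix_apply, ← Matrix.submatrix_map]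

/-- If `W(x) ∈ ℂ[x]^{s×t}` (`s ≥ t`) has full column rank `t` at every point
`u ∈ ℂⁿ`, then there is a matrix polynomial `P(x)` with `P(x)W(x) = I_t`. -/
theorem stmt5 (n s t : ℕ) (hst : t ≤ s)
    (W : Matrix (Fin s) (Fin t) (MvPolynomial (Fin n) ℂ))
    (hrk : ∀ u : Fin n → ℂ, (W.map (eval u)).rank = t) :
    ∃ P : Matrix (Fin t) (Fin s) (MvPolynomial (Fin n) ℂ), P * W = 1 :=
  stmt5_general n s t W hrk
end

section
/- Consider the constraints cᵢ(x) = xᵢ ≥ 0 (i = 1,...,n) and c_{n+1}(x) = x₁² + ... + xₙ² - 1 = 0 on ℝⁿ (nonnegative portion of the unit sphere). Let C(x) be the (2n+1)×(n+1) matrix whose columns are (∇cᵢ(x); cᵢ(x)e_i) for i = 1,...,n+1, i.e., C(x) = [[Iₙ, 2x], [diag(x), 0], [0, x ᵀx - 1]] appropriately arranged. Then the matrix polynomial L(x) = [[Iₙ - xxᵀ, x·𝟙ₙᵀ, 2x], [½xᵀ, -½𝟙ₙᵀ, -1]] satisfies L(x)C(x) = I_{n+1}. -/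
/-!
Multiply blockwise. In the top-left block, `x𝟙ᵀ · diag(x) = xxᵀ` cancels the `-xxᵀ` of `Iₙ - xxᵀ`.
In the last column, the sums `∑ xⱼ²` produced by `xxᵀ · 2x` and by `½xᵀ · 2x` cancel against
`c_{n+1}(x) = ∑ xⱼ² - 1`. Only `½ · 2 = 1` is used, so the identity holds over any commutative
ring with a chosen inverse of `2`.
-/

open MvPolynomial

section NonnegSphere

variable {ι R : Type*} [Fintype ι] [DecidableEq ι] [CommRing R]

def nonnegSphereConstraintMatrix (x : ι → R) : Matrix (ι ⊕ (ι ⊕ Unit)) (ι ⊕ Unit) R :=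
  Matrix.of fun p k =>
    match p, k with
    | Sum.inl j, Sum.inl i => if j = i then 1 else 0
    | Sum.inl j, Sum.inr _ => 2 * x j
    | Sum.inr (Sum.inl j), Sum.inl i => if j = i then x j else 0
    | Sum.inr (Sum.inl _), Sum.inr _ => 0
    | Sum.inr (Sum.inr _), Sum.inl _ => 0
    | Sum.inr (Sum.inr _), Sum.inr _ => (∑ j, x j ^ 2) - 1

def nonnegSphereLeftInverse (x : ι → R) (half : R) : Matrix (ι ⊕ Unit) (ι ⊕ (ι ⊕ Unit)) R :=
  Matrix.of fun i p =>
    match i, p with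
    | Sum.inl i, Sum.inl j => (if i = j then 1 else 0) - x i * x j
    | Sum.inl i, Sum.inr (Sum.inl _) => x i
    | Sum.inl i, Sum.inr (Sum.inr _) => 2 * x i
    | Sum.inr _, Sum.inl j => half * x j
    | Sum.inr _, Sum.inr (Sum.inl _) => -half
    | Sum.inr _, Sum.inr (Sum.inr _) => -1

theorem nonnegSphereLeftInverse_mul_constraintMatrix (x : ι → R) {half : R}
    (hhalf : half * 2 = 1) :
    nonnegSphereLeftInverse x half * nonnegSphereConstraintMatrix x = 1 := by
  ext (i | i) (k | k) <;>
    simp only [nonnegSphereLeftInverse, nonnegSphereConstraintMatrix, Matrix.mul_apply,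
      Matrix.of_apply, Fintype.sum_sum_type, Fintype.sum_unique, mul_zero, Finset.sum_const_zero,
      add_zero]
  case inl.inl => simp [Matrix.one_apply]
  case inr.inl => simp
  case inl.inr =>
    have hterm (j : ι) : ((if i = j then 1 else 0) - x i * x j) * (2 * x j) =
        (if i = j then 2 * x j else 0) - 2 * x i * x j ^ 2 := by
      split_ifs <;> ring
    simp only [hterm, Finset.sum_sub_distrib, Finset.sum_ite_eq, Finset.mem_univ, if_true,
      ← Finset.mul_sum, Matrix.one_apply_ne Sum.inl_ne_inr]
    ring
  case inr.inr =>
    have hterm (j : ι) : half * x j * (2 * x j) = x j ^ 2 := by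
      linear_combination x j ^ 2 * hhalf
    simp only [hterm, Matrix.one_apply_eq]
    ring

end NonnegSphere

/-- For the nonnegative portion of the unit sphere, with constraints
`cᵢ = xᵢ ≥ 0` (`i = 1,…,n`) and `c_{n+1} = x₁² + ⋯ + xₙ² - 1 = 0`, the matrix
polynomial `L(x) = [[Iₙ - xxᵀ, x𝟙ᵀ, 2x], [½xᵀ, -½𝟙ᵀ, -1]]` satisfies
`L(x) C(x) = I_{n+1}`, where `C(x)` has top block `[Iₙ, 2x]` (the gradients)
and bottom block `diag(x₁,…,xₙ, ∑xᵢ² - 1)`. -/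
theorem stmt9 (n : ℕ)
    (L : Matrix (Fin n ⊕ Unit) (Fin n ⊕ (Fin n ⊕ Unit)) (MvPolynomial (Fin n) ℝ))
    (hL : L = Matrix.of fun i p =>
      match i, p with
      | Sum.inl i, Sum.inl j => (if i = j then 1 else 0) - X i * X j
      | Sum.inl i, Sum.inr (Sum.inl _) => X i
      | Sum.inl i, Sum.inr (Sum.inr _) => 2 * X i
      | Sum.inr _, Sum.inl j => MvPolynomial.C (1/2 : ℝ) * X j
      | Sum.inr _, Sum.inr (Sum.inl _) => -MvPolynomial.C (1/2 : ℝ)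
      | Sum.inr _, Sum.inr (Sum.inr _) => -1)
    (Cm : Matrix (Fin n ⊕ (Fin n ⊕ Unit)) (Fin n ⊕ Unit) (MvPolynomial (Fin n) ℝ))
    (hCm : Cm = Matrix.of fun p k =>
      match p, k with
      | Sum.inl j, Sum.inl i => if j = i then 1 else 0
      | Sum.inl j, Sum.inr _ => 2 * X j
      | Sum.inr (Sum.inl j), Sum.inl i => if j = i then X j else 0
      | Sum.inr (Sum.inl _), Sum.inr _ => 0
      | Sum.inr (Sum.inr _), Sum.inl _ => 0
      | Sum.inr (Sum.inr _), Sum.inr _ => (∑ j, X j ^ 2) - 1) :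
    L * Cm = 1 := by
  have hhalf : C (1 / 2 : ℝ) * 2 = (1 : MvPolynomial (Fin n) ℝ) := by
    rw [← map_ofNat C 2, ← C_mul]; norm_num
  have hL' : L = nonnegSphereLeftInverse X (C (1 / 2)) := by
    rw [hL]; ext (i | i) (j | j | j) <;> rfl
  have hCm' : Cm = nonnegSphereConstraintMatrix X := by
    rw [hCm]; ext (i | i | i) (j | j) <;> rfl
  rw [hL', hCm']
  exact nonnegSphereLeftInverse_mul_constraintMatrix X hhalf
end

section
/- Let A ∈ ℝ^{m×n} with rank A = n and m > n, bᵢ ∈ ℝ, cᵢ(x) = aᵢᵀx - bᵢ, and suppose Ax - b is nonsingular (for every u ∈ ℂⁿ the active gradients {aᵢ : cᵢ(u)=0} are linearly independent). Let V be the collection of subsets I ⊆ {1,...,m} with |I| = m - n such that the rows {aⱼ : j ∉ I} span ℝⁿ. Then there exist real scalars ν_I (I ∈ V) such that Σ_{I ∈ V} ν_I ∏_{i ∈ I} cᵢ(x) = 1 identically as polynomials in x. -/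
/-! A set of more than `n` of the affine forms `cᵢ` has no common real zero: there the active rows
would be more than `n` linearly independent vectors of `ℂⁿ`. By the Fredholm alternative some
combination `∑ μⱼ cⱼ` is then the constant `1`, with `∑ μⱼ aⱼ = 0`. Multiplying `c_I` by this
identity writes it as a combination of the `c_{I ∪ {j}}`, and the linear relation shows that the
rows outside `I ∪ {j}` still span whenever `μⱼ ≠ 0`. Starting from `c_∅ = 1`, this rewriting can be
repeated until exactly `n` spanning rows remain outside each index set. -/

open MvPolynomial Submodule Finsupp

section LinearAlgebra

variable {K : Type*} [Field K]

theorem finrank_le_card_of_span_image_eq_top {ι V : Type*} [AddCommGroup V] [Module K V]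
    {v : ι → V} {T : Finset ι} (hT : span K (v '' T) = ⊤) : Module.finrank K V ≤ T.card := by
  classical
  have h := finrank_span_finset_le_card (R := K) (T.image v)
  rw [Set.finrank, Finset.coe_image, hT, finrank_top] at h
  exact h.trans Finset.card_image_le

theorem span_image_diff_singleton_eq {ι M : Type*} [AddCommGroup M] [Module K M]
    {v : ι → M} {s : Set ι} {l : ι →₀ K} (hl : l ∈ supported K K s)
    (h0 : linearCombination K v l = 0) {j : ι} (hj : l j ≠ 0) :
    span K (v '' (s \ {j})) = span K (v '' s) := by
  classical
  have hjs : j ∈ s := hl (mem_support_iff.2 hj)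
  have herase : l.erase j ∈ supported K K (s \ {j}) := fun i hi => by
    rw [Finset.mem_coe, support_erase, Finset.mem_erase] at hi
    exact ⟨hl hi.2, hi.1⟩
  rw [← single_add_erase j l, map_add, linearCombination_single] at h0
  have hmem : v j ∈ span K (v '' (s \ {j})) := by
    rw [← inv_smul_smul₀ hj (v j), eq_neg_of_add_eq_zero_left h0]
    exact smul_mem _ _ (neg_mem ((mem_span_image_iff_linearCombination K).2 ⟨_, herase, rfl⟩))
  rw [← span_insert_eq_span hmem, ← Set.image_insert_eq, Set.insert_sdiff_singleton,
    Set.insert_eq_of_mem hjs]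

theorem zero_one_mem_span_of_forall_exists_dotProduct_ne {ι σ : Type*} [Fintype σ]
    {a : ι → σ → K} {β : ι → K} {s : Set ι} (h : ∀ x : σ → K, ∃ i ∈ s, a i ⬝ᵥ x ≠ β i) :
    ((0 : σ → K), (1 : K)) ∈ span K ((fun i => (a i, β i)) '' s) := by
  classical
  by_contra hnot
  obtain ⟨φ, hφ, hker⟩ := exists_le_ker_of_notMem hnot
  have hdecomp : ∀ (v : σ → K) (t : K),
      φ (v, t) = ∑ k, v k * φ (Pi.single k 1, 0) + t * φ (0, 1) := by
    intro v t
    have hsplit : (v, t) = ∑ k, v k • ((Pi.single k 1 : σ → K), (0 : K)) + t • ((0 : σ → K), (1 : K)) := by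
      ext k <;> simp [Prod.fst_sum, Prod.snd_sum, Finset.sum_apply, Pi.single_apply]
    rw [hsplit, map_add, map_sum]
    simp only [map_smul, smul_eq_mul]
  -- the common zero produced by a functional vanishing on all `(aᵢ, βᵢ)` but not on `(0, 1)`
  obtain ⟨i, hi, hne⟩ := h fun k => -φ (Pi.single k 1, 0) / φ (0, 1)
  have hvanish : φ (a i, β i) = 0 := hker (subset_span ⟨i, hi, rfl⟩)
  rw [hdecomp] at hvanish
  apply hne
  simp only [dotProduct, mul_div_assoc', mul_neg, neg_div, Finset.sum_neg_distrib, ← Finset.sum_div]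
  field_simp
  linear_combination -hvanish

end LinearAlgebra

theorem exists_fun_eq_zero_and_sum_smul_eq_of_mem_span_image {α R M : Type*} [Fintype α]
    [Semiring R] [AddCommMonoid M] [Module R M] {v : α → M} {s : Set α} {x : M}
    (hx : x ∈ span R (v '' s)) : ∃ ν : α → R, (∀ a ∉ s, ν a = 0) ∧ ∑ a, ν a • v a = x := by
  obtain ⟨l, hl, rfl⟩ := (mem_span_image_iff_linearCombination R).1 hx
  exact ⟨l, fun a ha => notMem_support_iff.1 fun h => ha (hl h),
    (linearCombination_apply_of_mem_supported R (s := Finset.univ) (by simp)).symm⟩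

theorem prod_eq_sum_smul_prod_insert {ι K R : Type*} [DecidableEq ι] [Semiring K]
    [CommSemiring R] [Module K R] [IsScalarTower K R R] {f : ι → R} {l : ι →₀ K} {I : Finset ι}
    (hI : ∀ j ∈ l.support, j ∉ I) (h : linearCombination K f l = 1) :
    ∏ i ∈ I, f i = ∑ j ∈ l.support, l j • ∏ i ∈ insert j I, f i := by
  calc ∏ i ∈ I, f i = linearCombination K f l * ∏ i ∈ I, f i := by rw [h, one_mul]
    _ = _ := by
      rw [linearCombination_apply, Finsupp.sum, Finset.sum_mul]
      exact Finset.sum_congr rfl fun j hj => by rw [Finset.prod_insert (hI j hj), smul_mul_assoc]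

section AffineForms

variable {σ K : Type*} [Fintype σ] [Field K]

noncomputable def affineForm : (σ → K) × K →ₗ[K] MvPolynomial σ K where
  toFun p := ∑ k, C (p.1 k) * X k - C p.2
  map_add' p q := by
    simp only [Prod.fst_add, Prod.snd_add, Pi.add_apply, map_add, add_mul, Finset.sum_add_distrib]
    ring
  map_smul' r p := by
    simp [Finset.mul_sum, smul_eq_C_mul, mul_sub, mul_assoc]

theorem exists_linearCombination_affineForm_eq_one {ι : Type*} {a : ι → σ → K} {β : ι → K}
    {s : Set ι} (h : ∀ x : σ → K, ∃ i ∈ s, a i ⬝ᵥ x ≠ β i) :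
    ∃ l ∈ supported K K s, linearCombination K a l = 0 ∧
      linearCombination K (fun i => affineForm (a i, β i)) l = 1 := by
  obtain ⟨l, hl, hlc⟩ := (mem_span_image_iff_linearCombination K).1
    (neg_mem (zero_one_mem_span_of_forall_exists_dotProduct_ne h))
  refine ⟨l, hl, ?_, ?_⟩
  · have hfst := congrArg (LinearMap.fst K (σ → K) K) hlc
    rwa [apply_linearCombination, LinearMap.fst_apply, Prod.fst_neg, neg_zero] at hfst
  · have hform := congrArg affineForm hlc
    rw [apply_linearCombination] at hform
    refine hform.trans ?_
    simp [affineForm]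

variable {ι : Type*} [Fintype ι] [DecidableEq ι]

def cobases (a : ι → σ → K) : Set (Finset ι) :=
  {J | Jᶜ.card = Fintype.card σ ∧ span K (a '' ↑Jᶜ) = ⊤}

theorem card_eq_and_span_range_eq_top_of_mem_cobases {a : ι → σ → K} {J : Finset ι}
    (hJ : J ∈ cobases a) : J.card = Fintype.card ι - Fintype.card σ ∧
      span K (Set.range fun j : {j : ι // j ∉ J} => a j.1) = ⊤ := by
  obtain ⟨hcard, hspan⟩ := hJ
  refine ⟨?_, ?_⟩
  · rw [Finset.card_compl] at hcard
    have := J.card_le_univ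
    omega
  · rw [← hspan, Set.image_eq_range]
    congr 1
    ext y
    simp

theorem prod_affineForm_mem_span_cobases {a : ι → σ → K} {β : ι → K}
    (hact : ∀ (x : σ → K) (T : Finset ι), (∀ i ∈ T, a i ⬝ᵥ x = β i) → T.card ≤ Fintype.card σ)
    (I : Finset ι) (hI : span K (a '' ↑Iᶜ) = ⊤) :
    ∏ i ∈ I, affineForm (a i, β i) ∈
      span K ((fun J => ∏ i ∈ J, affineForm (a i, β i)) '' cobases a) := by
  induction hk : Iᶜ.card using Nat.strong_induction_on generalizing I with
  | _ k ih =>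
  by_cases hle : Iᶜ.card ≤ Fintype.card σ
  · refine subset_span ⟨I, ⟨le_antisymm hle ?_, hI⟩, rfl⟩
    simpa using finrank_le_card_of_span_image_eq_top hI
  have hnozero : ∀ x : σ → K, ∃ i ∈ (↑Iᶜ : Set ι), a i ⬝ᵥ x ≠ β i := by
    intro x
    by_contra! hall
    exact hle (hact x Iᶜ hall)
  obtain ⟨l, hl, hrel, hone⟩ := exists_linearCombination_affineForm_eq_one hnozero
  rw [prod_eq_sum_smul_prod_insert (fun j hj => Finset.mem_compl.1 (hl hj)) hone]
  refine sum_mem fun j hj => smul_mem _ _ (ih _ ?_ (insert j I) ?_ rfl)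
  · rw [← hk, Finset.compl_insert, Finset.card_erase_of_mem (hl hj)]
    omega
  · rw [Finset.compl_insert, Finset.coe_erase,
      span_image_diff_singleton_eq hl hrel (mem_support_iff.1 hj), hI]

end AffineForms

theorem card_le_of_forall_dotProduct_eq {ι σ : Type*} [Fintype σ] {a : ι → σ → ℝ} {β : ι → ℝ}
    (hns : ∀ u : σ → ℂ, LinearIndependent ℂ
      (fun i : {i : ι // ∑ j, (a i j : ℂ) * u j = (β i : ℂ)} => fun j : σ => (a i.1 j : ℂ)))
    (x : σ → ℝ) (T : Finset ι) (hT : ∀ i ∈ T, a i ⬝ᵥ x = β i) : T.card ≤ Fintype.card σ := by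
  let emb : T → {i : ι // ∑ j, (a i j : ℂ) * x j = (β i : ℂ)} :=
    fun i => ⟨i, by exact_mod_cast hT i i.2⟩
  have hli := (hns fun j => x j).comp emb fun _ _ h => Subtype.ext (congrArg Subtype.val h :)
  simpa using hli.fintype_card_le_finrank

theorem stmt11_general (n m : ℕ)
    (A : Matrix (Fin m) (Fin n) ℝ) (hA : A.rank = n) (b : Fin m → ℝ)
    (c : Fin m → MvPolynomial (Fin n) ℝ)
    (hc : ∀ i, c i = (∑ j, MvPolynomial.C (A i j) * X j) - MvPolynomial.C (b i))
    (hns : ∀ u : Fin n → ℂ,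
      LinearIndependent ℂ
        (fun i : {i : Fin m // ∑ j, (A i j : ℂ) * u j = (b i : ℂ)} =>
          fun j : Fin n => (A i.1 j : ℂ))) :
    ∃ ν : Finset (Fin m) → ℝ,
      (∀ I : Finset (Fin m),
        ¬(I.card = m - n ∧
          Submodule.span ℝ (Set.range fun j : {j : Fin m // j ∉ I} => A j.1) = ⊤) →
        ν I = 0) ∧
      ∑ I : Finset (Fin m), MvPolynomial.C (ν I) * ∏ i ∈ I, c i = 1 := by
  obtain rfl : c = fun i => affineForm (A i, b i) := funext hc
  have hrows : span ℝ (A '' ↑(∅ : Finset (Fin m))ᶜ) = ⊤ := by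
    apply eq_top_of_finrank_eq
    rw [Finset.compl_empty, Finset.coe_univ,
      show A '' Set.univ = Set.range A.row from Set.image_univ, ← Matrix.rank_eq_finrank_span_row,
      hA, Module.finrank_fin_fun]
  have hone := prod_affineForm_mem_span_cobases (card_le_of_forall_dotProduct_eq hns) ∅ hrows
  rw [Finset.prod_empty] at hone
  obtain ⟨ν, hν, hsum⟩ := exists_fun_eq_zero_and_sum_smul_eq_of_mem_span_image hone
  refine ⟨ν, fun I hI => hν I fun hmem => hI ?_, by simpa [smul_eq_C_mul] using hsum⟩
  simpa using card_eq_and_span_range_eq_top_of_mem_cobases hmem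

/-- Partition-of-unity step in the polyhedral construction: if `rank A = n`,
`m > n`, and `Ax - b` is nonsingular (active rows are linearly independent at
every complex point), then there are real scalars `ν_I`, supported on the
subsets `I ⊆ [m]` with `|I| = m - n` whose complementary rows span `ℝⁿ`, such
that `∑_I ν_I ∏_{i ∈ I} cᵢ(x) = 1` identically as polynomials. -/
theorem stmt11 (n m : ℕ) (hmn : n < m)
    (A : Matrix (Fin m) (Fin n) ℝ) (hA : A.rank = n) (b : Fin m → ℝ)
    (c : Fin m → MvPolynomial (Fin n) ℝ)
    (hc : ∀ i, c i = (∑ j, MvPolynomial.C (A i j) * X j) - MvPolynomial.C (b i))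
    (hns : ∀ u : Fin n → ℂ,
      LinearIndependent ℂ
        (fun i : {i : Fin m // ∑ j, (A i j : ℂ) * u j = (b i : ℂ)} =>
          fun j : Fin n => (A i.1 j : ℂ))) :
    ∃ ν : Finset (Fin m) → ℝ,
      (∀ I : Finset (Fin m),
        ¬(I.card = m - n ∧
          Submodule.span ℝ (Set.range fun j : {j : Fin m // j ∉ I} => A j.1) = ⊤) →
        ν I = 0) ∧
      ∑ I : Finset (Fin m), MvPolynomial.C (ν I) * ∏ i ∈ I, c i = 1 :=
  stmt11_general n m A hA b c hc hns
end

section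
/- Let c = (c₁,...,cₘ) be a tuple of real polynomials in x ∈ ℝⁿ, and let C(x) be the (n+m)×m matrix polynomial whose i-th column is (∇cᵢ(x); cᵢ(x)eᵢ) (gradient stacked over cᵢ(x) times the i-th unit vector in ℝᵐ). Suppose there exists L(x) ∈ ℝ[x]^{m×(n+m)} with L(x)C(x) = I_m, and let L₁(x) be the submatrix of the first n columns of L(x). Then for any polynomial f and any critical pair (u,λ) ∈ ℝⁿ × ℝᵐ satisfying ∇f(u) = Σᵢ λᵢ∇cᵢ(u) and λᵢcᵢ(u) = 0 for all i, it holds that λ = L₁(u)∇f(u). -/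
open MvPolynomial

/-! At a point `u`, the multiplier vector `λ` of a critical pair solves the linear system
`C(u) λ = (∇f(u); 0)`: the gradient rows are stationarity, the remaining rows are
complementarity. Evaluating `L C = Iₘ` at `u` exhibits `L(u)` as a left inverse of `C(u)`,
so `λ = L(u) (∇f(u); 0) = L₁(u) ∇f(u)`. -/

namespace Matrix

variable {ι κ R : Type*} [Fintype ι] [CommSemiring R]

theorem eq_mulVec_of_mul_eq_one [Fintype κ] [DecidableEq κ] {A : Matrix κ ι R}
    {B : Matrix ι κ R} (hAB : A * B = 1) {v : κ → R} {w : ι → R}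
    (hBv : B *ᵥ v = w) : v = A *ᵥ w := by
  rw [← hBv, mulVec_mulVec, hAB, one_mulVec]

theorem mulVec_sumElim_zero {μ : Type*} [Fintype μ] (A : Matrix κ (ι ⊕ μ) R) (g : ι → R)
    (k : κ) : (A *ᵥ Sum.elim g 0) k = ∑ j, A k (Sum.inl j) * g j := by
  simp [mulVec, dotProduct, Fintype.sum_sum_type]

end Matrix

section KKT

open Matrix

variable {σ ι R : Type*} [Fintype ι] [DecidableEq ι] [CommSemiring R]

noncomputable def kktMatrix (c : ι → MvPolynomial σ R) :
    Matrix (σ ⊕ ι) ι (MvPolynomial σ R) :=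
  Matrix.of fun p i =>
    match p with
    | Sum.inl j => pderiv j (c i)
    | Sum.inr k => if k = i then c i else 0

theorem kktMatrix_map_eval_mulVec (c : ι → MvPolynomial σ R) (u : σ → R) (lam : ι → R) :
    (kktMatrix c).map (eval u) *ᵥ lam =
      Sum.elim (fun j => ∑ i, lam i * eval u (pderiv j (c i))) fun k => lam k * eval u (c k) := by
  ext (j | k) <;> simp [kktMatrix, Matrix.mulVec, dotProduct, mul_comm, apply_ite (eval u)]

end KKT

/-- If `L(x) C(x) = Iₘ` where `C(x)` has columns `(∇cᵢ(x); cᵢ(x)eᵢ)`, then for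
any polynomial `f` and any critical pair `(u, λ)` (stationarity and
complementarity), the Lagrange multipliers are `λ = L₁(u) ∇f(u)`, with `L₁`
the first `n` columns of `L`. -/
theorem stmt13 (n m : ℕ)
    (c : Fin m → MvPolynomial (Fin n) ℝ)
    (Cm : Matrix (Fin n ⊕ Fin m) (Fin m) (MvPolynomial (Fin n) ℝ))
    (hCm : Cm = Matrix.of fun p i =>
      match p with
      | Sum.inl j => pderiv j (c i)
      | Sum.inr k => if k = i then c i else 0)
    (L : Matrix (Fin m) (Fin n ⊕ Fin m) (MvPolynomial (Fin n) ℝ))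
    (hL : L * Cm = 1) :
    ∀ (f : MvPolynomial (Fin n) ℝ) (u : Fin n → ℝ) (lam : Fin m → ℝ),
      (∀ j : Fin n, eval u (pderiv j f) = ∑ i, lam i * eval u (pderiv j (c i))) →
      (∀ i, lam i * eval u (c i) = 0) →
      ∀ i, lam i = ∑ j : Fin n, eval u (L i (Sum.inl j)) * eval u (pderiv j f) := by
  intro f u lam hstat hcomp i
  have hC : Cm = kktMatrix c := by rw [hCm]; ext (j | k) <;> rfl
  have hLeftInv : L.map (eval u) * (kktMatrix c).map (eval u) = 1 := by
    rw [← Matrix.map_mul, ← hC, hL, Matrix.map_one _ (map_zero _) (map_one _)]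
  have hSystem : ((kktMatrix c).map (eval u)).mulVec lam =
      Sum.elim (fun j => eval u (pderiv j f)) 0 := by
    rw [kktMatrix_map_eval_mulVec]
    congr 1
    · exact funext fun j => (hstat j).symm
    · exact funext hcomp
  rw [Matrix.eq_mulVec_of_mul_eq_one hLeftInv hSystem, Matrix.mulVec_sumElim_zero]
  rfl
end

section
/- Let I ⊆ ℝ[x] be an ideal with complex variety V_ℂ(I), let f ∈ ℝ[x], and suppose f vanishes identically on V_ℂ(I). Then for every ε > 0 there exists a polynomial σ_ε that is a square of a polynomial (σ_ε = s_ε² with s_ε ∈ ℝ[x]) such that f + ε - σ_ε ∈ I, and moreover the degree of s_ε is bounded independently of ε. -/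
/-!
By the relative Nullstellensatz (real coefficients, complex points), `f` lies in the radical
of `I`, say `f ^ (k + 1) ∈ I`. Truncating the binomial series of `√(ε + t)` after degree `k`
gives `p ∈ ℝ[t]` of degree `≤ k` with `p² ≡ t + ε` modulo `t ^ (k + 1)`; substituting `t := f`
yields `s := p(f)` with `f + ε - s² ∈ I` and `deg s ≤ k · deg f`, a bound independent of `ε`.
-/

open MvPolynomial

open Polynomial in
theorem Polynomial.exists_natDegree_le_X_pow_dvd_sq_sub {K : Type*} [Field K] [NeZero (2 : K)]
    {c : K} (hc : c ≠ 0) (m : ℕ) :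
    ∃ p : K[X], p.natDegree ≤ m ∧ X ^ (m + 1) ∣ p ^ 2 - (X + C (c ^ 2)) := by
  induction m with
  | zero => exact ⟨C c, by simp, -1, by rw [C_pow]; ring⟩
  | succ m ih =>
    obtain ⟨p, hdeg, q, hq⟩ := ih
    have hp0 : p.eval 0 ≠ 0 := by
      intro h
      have := congrArg (eval 0) hq
      simp [h, hc] at this
    -- Newton step: correcting `p` by `a X^(m+1)` kills the next coefficient of the error.
    set a := -q.eval 0 / (2 * p.eval 0)
    have hX : X ∣ q + C (2 * a) * p + C (a ^ 2) * X ^ (m + 1) := by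
      rw [X_dvd_iff, coeff_zero_eq_eval_zero]
      simp only [eval_add, eval_mul, eval_C, eval_pow, eval_X, zero_pow m.succ_ne_zero, mul_zero,
        add_zero, a]
      field_simp
      ring
    refine ⟨p + C a * X ^ (m + 1), ?_, ?_⟩
    · refine (natDegree_add_le _ _).trans (max_le (hdeg.trans m.le_succ) ?_)
      exact natDegree_C_mul_X_pow_le a _
    · have : (p + C a * X ^ (m + 1)) ^ 2 - (X + C (c ^ 2))
          = X ^ (m + 1) * (q + C (2 * a) * p + C (a ^ 2) * X ^ (m + 1)) := by
        simp only [C_mul, C_pow, map_ofNat] at hq ⊢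
        linear_combination hq
      rw [this, pow_succ]
      exact mul_dvd_mul_left _ hX

theorem Polynomial.totalDegree_aeval_le {σ R : Type*} [CommSemiring R] (p : Polynomial R)
    (f : MvPolynomial σ R) :
    (Polynomial.aeval f p).totalDegree ≤ p.natDegree * f.totalDegree := by
  rw [Polynomial.aeval_eq_sum_range]
  refine (totalDegree_finsetSum _ _).trans (Finset.sup_le fun i hi => ?_)
  refine (totalDegree_smul_le _ _).trans ((totalDegree_pow _ _).trans ?_)
  exact Nat.mul_le_mul_right _ (Nat.lt_succ_iff.mp (Finset.mem_range.mp hi))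

open Polynomial in
theorem Ideal.exists_natDegree_le_add_algebraMap_sq_sub_aeval_sq_mem {K A : Type*} [Field K]
    [NeZero (2 : K)] [CommRing A] [Algebra K A] {I : Ideal A} {a : A} {m : ℕ}
    (ha : a ^ (m + 1) ∈ I) {c : K} (hc : c ≠ 0) :
    ∃ p : K[X], p.natDegree ≤ m ∧ a + algebraMap K A (c ^ 2) - Polynomial.aeval a p ^ 2 ∈ I := by
  obtain ⟨p, hdeg, q, hq⟩ := exists_natDegree_le_X_pow_dvd_sq_sub hc m
  refine ⟨p, hdeg, ?_⟩
  have : a + algebraMap K A (c ^ 2) - Polynomial.aeval a p ^ 2 = -(Polynomial.aeval a q) * a ^ (m + 1) := by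
    have := congrArg (Polynomial.aeval a) hq
    simp only [map_sub, map_add, map_pow, map_mul, Polynomial.aeval_X, Polynomial.aeval_C] at this ⊢
    linear_combination -this
  rw [this]
  exact I.mul_mem_left _ ha

/-- If `f ∈ ℝ[x]` vanishes identically on the complex variety `V_ℂ(I)` of an
ideal `I ⊆ ℝ[x]`, then there is a degree bound `d` such that for every `ε > 0`
there is a polynomial `s_ε ∈ ℝ[x]` with `deg s_ε ≤ d` and
`f + ε - s_ε² ∈ I`. -/
theorem stmt16 (n : ℕ) (I : Ideal (MvPolynomial (Fin n) ℝ)) (f : MvPolynomial (Fin n) ℝ)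
    (hvan : ∀ v : Fin n → ℂ,
      (∀ p ∈ I, eval v (MvPolynomial.map (algebraMap ℝ ℂ) p) = 0) →
      eval v (MvPolynomial.map (algebraMap ℝ ℂ) f) = 0) :
    ∃ d : ℕ, ∀ ε : ℝ, 0 < ε →
      ∃ s : MvPolynomial (Fin n) ℝ,
        s.totalDegree ≤ d ∧ f + MvPolynomial.C ε - s ^ 2 ∈ I := by
  have hrad : f ∈ I.radical := by
    rw [← vanishingIdeal_zeroLocus_eq_radical (K := ℂ)]
    intro v hv
    simp only [mem_zeroLocus_iff, aeval_eq_eval₂Hom, coe_eval₂Hom, eval₂_eq_eval_map] at hv ⊢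
    exact hvan v hv
  obtain ⟨k, hk⟩ := hrad
  refine ⟨k * f.totalDegree, fun ε hε => ?_⟩
  obtain ⟨p, hdeg, hp⟩ := Ideal.exists_natDegree_le_add_algebraMap_sq_sub_aeval_sq_mem
    (I.pow_mem_of_pow_mem hk k.le_succ) (Real.sqrt_ne_zero'.mpr hε)
  refine ⟨Polynomial.aeval f p, (p.totalDegree_aeval_le f).trans (Nat.mul_le_mul_right _ hdeg), ?_⟩
  rwa [Real.sq_sqrt hε.le, MvPolynomial.algebraMap_eq] at hp
end
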